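/- arXiv:2412.19599 — 2 statements merged into one kernel-verified Lean document; each statement's English description precedes it below -/
import Mathlib

section
/- Let H be a Hermitian matrix on a finite-dimensional complex Hilbert space with spectral decomposition H = Σ_j E_j Π_j, let σ > 0, and let G_σ(x) = Σ_j (√2 σ/√π)^{1/2} e^{−σ²(E_j−x)²} Π_j be the Gaussian energy filter. Then for every complex matrix ρ, ∫_ℝ G_σ(x) ρ G_σ(x) dx = Σ_{i,j} e^{−σ²(E_i−E_j)²/2} Π_i ρ Π_j; consequently the Gaussian stabilization channel admits the filter representation 𝒢_σ ρ = ∫_ℝ G_σ(x) ρ G_σ(x) dx. -/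
open MeasureTheory Matrix
open scoped ComplexOrder

noncomputable section

attribute [local instance] Matrix.frobeniusNormedAddCommGroup Matrix.frobeniusNormedSpace

/-- The Gaussian energy filter `G_σ(x) = Σ_j (√2 σ/√π)^{1/2} e^{−σ²(E_j−x)²} Π_j`. -/
def gaussianFilter {n m : ℕ} (E : Fin m → ℝ) (P : Fin m → Matrix (Fin n) (Fin n) ℂ)
    (σ x : ℝ) : Matrix (Fin n) (Fin n) ℂ :=
  ∑ j, (Real.sqrt (Real.sqrt 2 * σ / Real.sqrt Real.pi) *
      Real.exp (-σ ^ 2 * (E j - x) ^ 2)) • P j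

/-!
Both sides are expanded in the spectral decomposition. Since `G_σ(x) = ∑ⱼ wⱼ(x) Πⱼ` with
scalar weights, `∫ G_σ ρ G_σ = ∑ᵢⱼ (∫ wᵢ wⱼ) Πᵢ ρ Πⱼ`; completing the square, `wᵢ(x) wⱼ(x)` is
`e^{−σ²(Eᵢ−Eⱼ)²/2}` times the density of `N((Eᵢ+Eⱼ)/2, 1/(4σ²))`, so its integral is that factor.
On the channel side `e^{−iHt} = ∑ⱼ e^{−iEⱼt} Πⱼ`, because `c ↦ ∑ⱼ cⱼ Πⱼ` is a continuous algebra
map and hence commutes with `exp`; the `(i, j)` coefficient of the channel is then the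
characteristic function of `N(0, σ²)` at `Eⱼ − Eᵢ`, which is again `e^{−σ²(Eᵢ−Eⱼ)²/2}`.
-/

open ProbabilityTheory
open scoped Real Complex NNReal

section SpectralCalculus

variable {ι R A : Type*} [Fintype ι]

theorem Finset.sum_smul_mul_mul_sum_smul {κ : Type*} [Fintype κ] [CommSemiring R] [Semiring A]
    [Algebra R A] (a : ι → R) (b : κ → R) (P : ι → A) (Q : κ → A) (ρ : A) :
    (∑ i, a i • P i) * ρ * ∑ j, b j • Q j = ∑ i, ∑ j, (a i * b j) • (P i * ρ * Q j) := by
  simp only [Finset.sum_mul]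
  simp only [Finset.mul_sum, smul_mul_assoc, mul_smul_comm, smul_smul, mul_comm]

namespace CompleteOrthogonalIdempotents

variable [CommSemiring R] [Semiring A] [Algebra R A] {e : ι → A}

def sumSMulAlgHom (he : CompleteOrthogonalIdempotents e) : (ι → R) →ₐ[R] A :=
  AlgHom.ofLinearMap (Fintype.linearCombination R e)
    (by simp [Fintype.linearCombination_apply, he.complete])
    (fun a b => by
      classical
      simp only [Fintype.linearCombination_apply, Finset.sum_mul, Finset.mul_sum,
        smul_mul_smul_comm, he.mul_eq, smul_ite, smul_zero, Finset.sum_ite_eq', Finset.mem_univ,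
        if_true, Pi.mul_apply])

theorem sumSMulAlgHom_apply (he : CompleteOrthogonalIdempotents e) (c : ι → R) :
    he.sumSMulAlgHom c = ∑ i, c i • e i :=
  rfl

end CompleteOrthogonalIdempotents

theorem CompleteOrthogonalIdempotents.exp_sum_smul [Ring A] [Algebra ℂ A] [TopologicalSpace A]
    [IsTopologicalRing A] [ContinuousSMul ℂ A] [T2Space A] {e : ι → A}
    (he : CompleteOrthogonalIdempotents e) (c : ι → ℂ) :
    NormedSpace.exp (∑ i, c i • e i) = ∑ i, cexp (c i) • e i := by
  have hφ : Continuous (he.sumSMulAlgHom (R := ℂ)) :=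
    (he.sumSMulAlgHom (R := ℂ)).toLinearMap.continuous_of_finiteDimensional
  have hsum : HasSum (fun k => (k.factorial⁻¹ : ℂ) • he.sumSMulAlgHom c ^ k)
      (he.sumSMulAlgHom (NormedSpace.exp c)) := by
    simpa [Function.comp_def, map_pow] using
      (NormedSpace.exp_series_hasSum_exp' (𝕂 := ℂ) c).map _ hφ
  rw [← he.sumSMulAlgHom_apply, NormedSpace.exp_eq_tsum ℂ]
  beta_reduce
  rw [hsum.tsum_eq, Pi.exp_def, he.sumSMulAlgHom_apply, Complex.exp_eq_exp_ℂ]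

end SpectralCalculus

theorem MeasureTheory.integral_sum_sum_smul {α ι κ 𝕜 E : Type*} [MeasurableSpace α]
    {μ : Measure α} [Fintype ι] [Fintype κ] [RCLike 𝕜] [NormedAddCommGroup E] [NormedSpace ℝ E]
    [NormedSpace 𝕜 E] [CompleteSpace E]
    {f : ι → κ → α → 𝕜} (hf : ∀ i j, Integrable (f i j) μ) (v : ι → κ → E) :
    ∫ x, ∑ i, ∑ j, f i j x • v i j ∂μ = ∑ i, ∑ j, (∫ x, f i j x ∂μ) • v i j := by
  have hint : ∀ i j, Integrable (fun x => f i j x • v i j) μ := fun i j => (hf i j).smul_const _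
  rw [integral_finsetSum _ fun i _ => integrable_finsetSum _ fun j _ => hint i j]
  refine Finset.sum_congr rfl fun i _ => ?_
  rw [integral_finsetSum _ fun j _ => hint i j]
  exact Finset.sum_congr rfl fun j _ => integral_smul_const _ _

theorem gaussianFilter_weight_mul_eq {σ : ℝ} (hσ : 0 < σ) (a b x : ℝ) :
    √(√2 * σ / √π) * rexp (-σ ^ 2 * (a - x) ^ 2) * (√(√2 * σ / √π) * rexp (-σ ^ 2 * (b - x) ^ 2))
      = rexp (-σ ^ 2 * (a - b) ^ 2 / 2) *
          gaussianPDFReal ((a + b) / 2) (4 * σ ^ 2)⁻¹.toNNReal x := by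
  have hv : ((4 * σ ^ 2)⁻¹.toNNReal : ℝ) = (4 * σ ^ 2)⁻¹ :=
    Real.coe_toNNReal _ (by positivity)
  have hnorm : √(2 * π * (4 * σ ^ 2)⁻¹) = √π / (√2 * σ) := by
    rw [Real.sqrt_eq_iff_mul_self_eq_of_pos (by positivity)]
    field_simp
    rw [Real.sq_sqrt Real.pi_pos.le, Real.sq_sqrt zero_le_two]
    ring
  rw [gaussianPDFReal, hv, hnorm, inv_div, mul_mul_mul_comm,
    Real.mul_self_sqrt (by positivity), ← Real.exp_add, mul_left_comm, ← Real.exp_add]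
  congr 2
  field_simp
  ring

theorem integral_gaussianFilter_mul_mul {n m : ℕ} (E : Fin m → ℝ)
    (P : Fin m → Matrix (Fin n) (Fin n) ℂ) {σ : ℝ} (hσ : 0 < σ) (ρ : Matrix (Fin n) (Fin n) ℂ) :
    ∫ x, gaussianFilter E P σ x * ρ * gaussianFilter E P σ x
      = ∑ i, ∑ j, rexp (-σ ^ 2 * (E i - E j) ^ 2 / 2) • (P i * ρ * P j) := by
  have hv : (4 * σ ^ 2)⁻¹.toNNReal ≠ 0 := (Real.toNNReal_pos.mpr (by positivity)).ne'
  simp only [gaussianFilter, Finset.sum_smul_mul_mul_sum_smul, gaussianFilter_weight_mul_eq hσ]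
  rw [integral_sum_sum_smul fun i j => (integrable_gaussianPDFReal _ _).const_mul _]
  simp only [integral_const_mul, integral_gaussianPDFReal_eq_one _ hv, mul_one]

theorem integral_gaussianDensity_smul_eq_integral_gaussianReal {F : Type*} [NormedAddCommGroup F]
    [NormedSpace ℝ F] {σ : ℝ} (hσ : σ ≠ 0) (f : ℝ → F) :
    ∫ t, ((√(2 * π * σ ^ 2))⁻¹ * rexp (-t ^ 2 / (2 * σ ^ 2))) • f t
      = ∫ t, f t ∂gaussianReal 0 (σ ^ 2).toNNReal := by
  rw [integral_gaussianReal_eq_integral_smul (Real.toNNReal_pos.mpr (by positivity)).ne']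
  simp [gaussianPDFReal, Real.coe_toNNReal _ (sq_nonneg σ)]

theorem integral_exp_conj_gaussianReal {N ι : Type*} [Fintype N] [DecidableEq N] [Fintype ι]
    {P : ι → Matrix N N ℂ} (hP : CompleteOrthogonalIdempotents P) (E : ι → ℝ) (v : ℝ≥0)
    (ρ : Matrix N N ℂ) :
    ∫ t, NormedSpace.exp ((-(Complex.I * t)) • ∑ j, (E j : ℂ) • P j) * ρ *
        NormedSpace.exp ((Complex.I * t) • ∑ j, (E j : ℂ) • P j) ∂gaussianReal 0 v
      = ∑ i, ∑ j, rexp (-v * (E i - E j) ^ 2 / 2) • (P i * ρ * P j) := by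
  have hexp (z : ℂ) : NormedSpace.exp (z • ∑ j, (E j : ℂ) • P j) = ∑ j, cexp (z * E j) • P j := by
    simp only [Finset.smul_sum, smul_smul]
    exact hP.exp_sum_smul _
  have hphase (i j : ι) (t : ℝ) :
      cexp (-(Complex.I * t) * E i) * cexp (Complex.I * t * E j)
        = cexp ((E j - E i : ℝ) * t * Complex.I) := by
    rw [← Complex.exp_add]
    push_cast
    ring_nf
  have hint (d : ℝ) : Integrable (fun t : ℝ => cexp (d * t * Complex.I)) (gaussianReal 0 v) :=
    .of_bound (by fun_prop) 1 (ae_of_all _ fun t => by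
      rw [← Complex.ofReal_mul, Complex.norm_exp_ofReal_mul_I])
  simp only [hexp, Finset.sum_smul_mul_mul_sum_smul, hphase]
  rw [integral_sum_sum_smul fun i j => hint _]
  refine Finset.sum_congr rfl fun i _ => Finset.sum_congr rfl fun j _ => ?_
  rw [← charFun_apply_real, charFun_gaussianReal, ← Complex.coe_smul]
  congr 1
  push_cast
  ring_nf

theorem gaussian_filter_representation_general
    {n m : ℕ} (H : Matrix (Fin n) (Fin n) ℂ)
    (E : Fin m → ℝ) (P : Fin m → Matrix (Fin n) (Fin n) ℂ)
    (hOrth : ∀ j k, P j * P k = if j = k then P j else 0)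
    (hSum : ∑ j, P j = 1)
    (hH : H = ∑ j, (E j : ℂ) • P j)
    (σ : ℝ) (hσ : 0 < σ) (ρ : Matrix (Fin n) (Fin n) ℂ) :
    (∫ x : ℝ, gaussianFilter E P σ x * ρ * gaussianFilter E P σ x) =
        ∑ i, ∑ j, Real.exp (-σ ^ 2 * (E i - E j) ^ 2 / 2) • (P i * ρ * P j) ∧
      (∫ t : ℝ, ((Real.sqrt (2 * Real.pi * σ ^ 2))⁻¹ * Real.exp (-t ^ 2 / (2 * σ ^ 2))) •
          (NormedSpace.exp ((-(Complex.I * (t : ℂ))) • H) * ρ *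
            NormedSpace.exp ((Complex.I * (t : ℂ)) • H))) =
        ∫ x : ℝ, gaussianFilter E P σ x * ρ * gaussianFilter E P σ x := by
  have hP : CompleteOrthogonalIdempotents P := ⟨OrthogonalIdempotents.iff_mul_eq.mpr hOrth, hSum⟩
  have hfilter := integral_gaussianFilter_mul_mul E P hσ ρ
  refine ⟨hfilter, ?_⟩
  rw [hfilter, integral_gaussianDensity_smul_eq_integral_gaussianReal hσ.ne', hH,
    integral_exp_conj_gaussianReal hP, Real.coe_toNNReal _ (sq_nonneg σ)]

/-- The Gaussian energy filter representation of Gaussian stabilization: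
`∫ G_σ(x) ρ G_σ(x) dx = Σ_{i,j} e^{−σ²(E_i−E_j)²/2} Π_i ρ Π_j`, and consequently the
Gaussian stabilization channel `𝒢_σ ρ = ∫ g_σ(t) e^{−iHt} ρ e^{iHt} dt` equals
`∫ G_σ(x) ρ G_σ(x) dx`. -/
theorem gaussian_filter_representation
    {n m : ℕ} (H : Matrix (Fin n) (Fin n) ℂ)
    (E : Fin m → ℝ) (P : Fin m → Matrix (Fin n) (Fin n) ℂ)
    (hE : Function.Injective E)
    (hHerm : ∀ j, (P j)ᴴ = P j)
    (hOrth : ∀ j k, P j * P k = if j = k then P j else 0)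
    (hSum : ∑ j, P j = 1)
    (hH : H = ∑ j, (E j : ℂ) • P j)
    (σ : ℝ) (hσ : 0 < σ) (ρ : Matrix (Fin n) (Fin n) ℂ) :
    (∫ x : ℝ, gaussianFilter E P σ x * ρ * gaussianFilter E P σ x) =
        ∑ i, ∑ j, Real.exp (-σ ^ 2 * (E i - E j) ^ 2 / 2) • (P i * ρ * P j) ∧
      (∫ t : ℝ, ((Real.sqrt (2 * Real.pi * σ ^ 2))⁻¹ * Real.exp (-t ^ 2 / (2 * σ ^ 2))) •
          (NormedSpace.exp ((-(Complex.I * (t : ℂ))) • H) * ρ *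
            NormedSpace.exp ((Complex.I * (t : ℂ)) • H))) =
        ∫ x : ℝ, gaussianFilter E P σ x * ρ * gaussianFilter E P σ x :=
  gaussian_filter_representation_general H E P hOrth hSum hH σ hσ ρ
end
end

section
/- Let T, Ω > 0, let 𝔍(ω) = (ω³/Ω²) e^{−ω/Ω}, and let C(T, 𝔍; t) = ∫_0^∞ 𝔍(ω) [ e^{iωt}/(e^{ω/T} − 1) + e^{−iωt} (1/(e^{ω/T} − 1) + 1) ] dω. Then ∫_0^∞ t |C(T, 𝔍; t)| dt ≤ 3 + π² T²/Ω²; in particular the bath correlation timescale τ_B(T, 𝔍) = 4 τ_R(T, 𝔍) ∫_0^∞ t |C(T, 𝔍; t)| dt is finite for every finite temperature T. -/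
/-!
Expanding the Bose factor `1/(e^{ω/T} - 1) = ∑_{k ≥ 1} e^{-kω/T}` turns `C(t)` into a series of
Laplace transforms of `ω³`: with `r_k = 1/Ω + k/T`,
`C(t) = (6/Ω²) ∑_k ((r_k + it)^{-4} + (r_{k+1} - it)^{-4})`.
Hence `|C(t)| ≤ (6/Ω²) ∑_k ((r_k² + t²)^{-2} + (r_{k+1}² + t²)^{-2})`, and since
`∫_0^∞ t (r² + t²)^{-2} dt = 1/(2r²)`, the first moment is at most
`(3/Ω²) ∑_k (r_k^{-2} + r_{k+1}^{-2}) = 3 + (6/Ω²) ∑_{k ≥ 1} r_k^{-2} ≤ 3 + (6T²/Ω²) ζ(2)`.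
-/

open MeasureTheory

noncomputable section

/-- The super-Ohmic (`s = 3`) spectral density with exponential cutoff,
`𝔍(ω) = ω³/Ω² · e^{−ω/Ω}`. -/
def Jspec (Ω ω : ℝ) : ℝ := ω ^ 3 / Ω ^ 2 * Real.exp (-ω / Ω)

/-- The bath correlation function
`C(T,𝔍;t) = ∫_0^∞ 𝔍(ω)[e^{iωt}/(e^{ω/T}−1) + e^{−iωt}(1/(e^{ω/T}−1)+1)] dω`. -/
def bathCorr (T Ω t : ℝ) : ℂ :=
  ∫ ω in Set.Ioi (0 : ℝ), (Jspec Ω ω : ℂ) *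
    (Complex.exp (Complex.I * (ω : ℂ) * (t : ℂ)) / (Complex.exp ((ω : ℂ) / (T : ℂ)) - 1) +
      Complex.exp (-(Complex.I * (ω : ℂ) * (t : ℂ))) *
        (1 / (Complex.exp ((ω : ℂ) / (T : ℂ)) - 1) + 1))

open Set Filter Complex
open scoped Real Nat Topology

section Laplace

variable {z : ℂ}

lemma norm_pow_mul_cexp_neg_mul (n : ℕ) {ω : ℝ} (hω : 0 ≤ ω) :
    ‖(ω : ℂ) ^ n * cexp (-(z * ω))‖ = ω ^ n * rexp (-(z.re * ω)) := by
  rw [norm_mul, norm_pow, norm_exp, norm_real, Real.norm_of_nonneg hω]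
  simp

lemma integrableOn_pow_mul_exp_neg_mul (n : ℕ) {c : ℝ} (hc : 0 < c) :
    IntegrableOn (fun ω : ℝ => ω ^ n * rexp (-(c * ω))) (Ioi 0) := by
  refine (integrableOn_rpow_mul_exp_neg_mul_rpow (s := n) (by linarith [n.cast_nonneg (α := ℝ)])
    zero_lt_one hc).congr_fun (fun ω _ => ?_) measurableSet_Ioi
  simp [Real.rpow_natCast]

lemma integrableOn_pow_mul_cexp_neg_mul (n : ℕ) (hz : 0 < z.re) :
    IntegrableOn (fun ω : ℝ => (ω : ℂ) ^ n * cexp (-(z * ω))) (Ioi 0) := by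
  refine Integrable.mono' (integrableOn_pow_mul_exp_neg_mul n hz)
    (by fun_prop : Continuous _).aestronglyMeasurable ?_
  filter_upwards [ae_restrict_mem measurableSet_Ioi] with ω hω
  exact (norm_pow_mul_cexp_neg_mul n (le_of_lt hω)).le

lemma tendsto_pow_mul_cexp_neg_mul_atTop (n : ℕ) (hz : 0 < z.re) :
    Tendsto (fun ω : ℝ => (ω : ℂ) ^ n * cexp (-(z * ω))) atTop (𝓝 0) := by
  refine squeeze_zero_norm' ?_ (by simpa [Real.rpow_natCast, neg_mul] using
    tendsto_rpow_mul_exp_neg_mul_atTop_nhds_zero n z.re hz)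
  filter_upwards [eventually_ge_atTop 0] with ω hω
  exact (norm_pow_mul_cexp_neg_mul n hω).le

lemma integral_pow_succ_mul_cexp_neg_mul (n : ℕ) (hz : 0 < z.re) :
    ∫ ω in Ioi (0 : ℝ), (ω : ℂ) ^ (n + 1) * cexp (-(z * ω)) =
      (n + 1) / z * ∫ ω in Ioi (0 : ℝ), (ω : ℂ) ^ n * cexp (-(z * ω)) := by
  have hz0 : z ≠ 0 := fun h => by simp [h] at hz
  have hderiv : ∀ ω ∈ Ioi (0 : ℝ), HasDerivAt (fun ω : ℝ => (ω : ℂ) ^ (n + 1) * cexp (-(z * ω)))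
      ((n + 1) * ((ω : ℂ) ^ n * cexp (-(z * ω))) -
        z * ((ω : ℂ) ^ (n + 1) * cexp (-(z * ω)))) ω := by
    intro ω _
    have h := ((hasDerivAt_pow (n + 1) (ω : ℂ)).mul
      ((hasDerivAt_id (ω : ℂ)).const_mul z).neg.cexp).comp_ofReal
    convert h using 1
    · rfl
    · simp only [Pi.neg_apply, id, mul_one, Nat.cast_succ, Nat.add_sub_cancel]
      ring
  have hparts := integral_Ioi_of_hasDerivAt_of_tendsto
    (by fun_prop : Continuous fun ω : ℝ => (ω : ℂ) ^ (n + 1) * cexp (-(z * ω))).continuousWithinAt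
    hderiv (((integrableOn_pow_mul_cexp_neg_mul n hz).const_mul _).sub
      ((integrableOn_pow_mul_cexp_neg_mul (n + 1) hz).const_mul _))
    (tendsto_pow_mul_cexp_neg_mul_atTop (n + 1) hz)
  rw [integral_sub ((integrableOn_pow_mul_cexp_neg_mul n hz).const_mul _)
      ((integrableOn_pow_mul_cexp_neg_mul (n + 1) hz).const_mul _),
    integral_const_mul, integral_const_mul] at hparts
  simp only [ofReal_zero, zero_pow (Nat.succ_ne_zero n), zero_mul,
    sub_zero] at hparts
  rw [div_mul_eq_mul_div, eq_div_iff hz0]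
  linear_combination -hparts

theorem integral_pow_mul_cexp_neg_mul (n : ℕ) (hz : 0 < z.re) :
    ∫ ω in Ioi (0 : ℝ), (ω : ℂ) ^ n * cexp (-(z * ω)) = n ! / z ^ (n + 1) := by
  have hz0 : z ≠ 0 := fun h => by simp [h] at hz
  induction n with
  | zero =>
    simpa [neg_mul, ← neg_mul] using integral_exp_mul_complex_Ioi (a := -z) (by simpa) 0
  | succ n ih =>
    rw [integral_pow_succ_mul_cexp_neg_mul n hz, ih]
    field_simp
    push_cast [Nat.factorial_succ]
    ring

theorem integral_pow_mul_exp_neg_mul (n : ℕ) {c : ℝ} (hc : 0 < c) :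
    ∫ ω in Ioi (0 : ℝ), ω ^ n * rexp (-(c * ω)) = n ! / c ^ (n + 1) := by
  apply ofReal_injective
  rw [← integral_complex_ofReal]
  push_cast
  exact integral_pow_mul_cexp_neg_mul n (by simpa using hc)

end Laplace

section Moment

variable {r : ℝ}

lemma hasDerivAt_neg_inv_two_mul_sq_add_sq (hr : 0 < r) (t : ℝ) :
    HasDerivAt (fun t : ℝ => -(2 * (r ^ 2 + t ^ 2))⁻¹) (t / (r ^ 2 + t ^ 2) ^ 2) t := by
  have h := ((((hasDerivAt_pow 2 t).const_add (r ^ 2)).const_mul 2).inv (by positivity)).neg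
  refine h.congr_deriv ?_
  norm_num
  field_simp

lemma tendsto_neg_inv_two_mul_sq_add_sq_atTop :
    Tendsto (fun t : ℝ => -(2 * (r ^ 2 + t ^ 2))⁻¹) atTop (𝓝 0) := by
  have h : Tendsto (fun t : ℝ => 2 * (r ^ 2 + t ^ 2)) atTop atTop :=
    tendsto_atTop_mono (fun t => by nlinarith [sq_nonneg r, sq_nonneg (t - 1)])
      (tendsto_pow_atTop two_ne_zero)
  simpa using h.inv_tendsto_atTop.neg

lemma integrableOn_div_sq_add_sq_sq (hr : 0 < r) :
    IntegrableOn (fun t : ℝ => t / (r ^ 2 + t ^ 2) ^ 2) (Ioi 0) :=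
  integrableOn_Ioi_deriv_of_nonneg
    (hasDerivAt_neg_inv_two_mul_sq_add_sq hr 0).continuousAt.continuousWithinAt
    (fun t _ => hasDerivAt_neg_inv_two_mul_sq_add_sq hr t)
    (fun t ht => div_nonneg (le_of_lt ht) (by positivity)) tendsto_neg_inv_two_mul_sq_add_sq_atTop

lemma integral_div_sq_add_sq_sq (hr : 0 < r) :
    ∫ t in Ioi (0 : ℝ), t / (r ^ 2 + t ^ 2) ^ 2 = 1 / (2 * r ^ 2) := by
  rw [integral_Ioi_of_hasDerivAt_of_nonneg
    (hasDerivAt_neg_inv_two_mul_sq_add_sq hr 0).continuousAt.continuousWithinAt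
    (fun t _ => hasDerivAt_neg_inv_two_mul_sq_add_sq hr t)
    (fun t ht => div_nonneg (le_of_lt ht) (by positivity)) tendsto_neg_inv_two_mul_sq_add_sq_atTop]
  simp

end Moment

-- `f` need not be measurable: the bound goes through the lower Lebesgue integral of `‖f‖`.
theorem integral_le_tsum_integral_of_norm_le_tsum {α : Type*} [MeasurableSpace α] {μ : Measure α}
    {f : α → ℝ} {g : ℕ → α → ℝ} (hg : ∀ k, Integrable (g k) μ) (hg₀ : ∀ k, 0 ≤ᵐ[μ] g k)
    (hsum : Summable fun k => ∫ x, g k x ∂μ)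
    (hle : ∀ᵐ x ∂μ, Summable (g · x) ∧ ‖f x‖ ≤ ∑' k, g k x) :
    ∫ x, f x ∂μ ≤ ∑' k, ∫ x, g k x ∂μ := by
  have hint₀ (k : ℕ) : 0 ≤ ∫ x, g k x ∂μ := integral_nonneg_of_ae (hg₀ k)
  refine (Real.le_norm_self _).trans <| (norm_integral_le_lintegral_norm f).trans <|
    ENNReal.toReal_le_of_le_ofReal (tsum_nonneg hint₀) ?_
  calc ∫⁻ x, ENNReal.ofReal ‖f x‖ ∂μ ≤ ∫⁻ x, ∑' k, ENNReal.ofReal (g k x) ∂μ := by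
        refine lintegral_mono_ae ?_
        filter_upwards [hle, ae_all_iff.mpr hg₀] with x ⟨hs, hx⟩ h₀
        rw [← ENNReal.ofReal_tsum_of_nonneg h₀ hs]
        exact ENNReal.ofReal_le_ofReal hx
    _ = ∑' k, ENNReal.ofReal (∫ x, g k x ∂μ) := by
        rw [lintegral_tsum fun k => (hg k).aemeasurable.ennreal_ofReal]
        exact tsum_congr fun k => (ofReal_integral_eq_lintegral_ofReal (hg k) (hg₀ k)).symm
    _ = ENNReal.ofReal (∑' k, ∫ x, g k x ∂μ) := (ENNReal.ofReal_tsum_of_nonneg hint₀ hsum).symm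

lemma cexp_sub_one_ne_zero {w : ℂ} (hw : 0 < w.re) : cexp w - 1 ≠ 0 := by
  refine sub_ne_zero.mpr fun h => hw.ne' ?_
  simpa [norm_exp] using congrArg norm h

lemma hasSum_cexp_neg_pow {w : ℂ} (hw : 0 < w.re) :
    HasSum (fun k : ℕ => cexp (-w) ^ k) (1 / (cexp w - 1) + 1) := by
  have hE := cexp_sub_one_ne_zero hw
  have h := hasSum_geometric_of_norm_lt_one (ξ := cexp (-w)) (by simpa [norm_exp] using hw)
  rwa [show (1 - cexp (-w))⁻¹ = 1 / (cexp w - 1) + 1 by rw [exp_neg]; field_simp; ring] at h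

lemma hasSum_cexp_neg_pow_succ {w : ℂ} (hw : 0 < w.re) :
    HasSum (fun k : ℕ => cexp (-w) ^ (k + 1)) (1 / (cexp w - 1)) := by
  have hE := cexp_sub_one_ne_zero hw
  have h := (hasSum_cexp_neg_pow hw).mul_left (cexp (-w))
  rw [show cexp (-w) * (1 / (cexp w - 1) + 1) = 1 / (cexp w - 1) by
    rw [exp_neg]; field_simp; ring] at h
  simpa only [← pow_succ'] using h

lemma hasSum_one_div_nat_add_one_sq : HasSum (fun k : ℕ => 1 / ((k : ℝ) + 1) ^ 2) (π ^ 2 / 6) := by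
  simpa using (hasSum_nat_add_iff' 1).mpr hasSum_zeta_two

lemma norm_ofReal_add_mul_I_pow_four (x y : ℝ) : ‖((x : ℂ) + y * I) ^ 4‖ = (x ^ 2 + y ^ 2) ^ 2 := by
  rw [norm_pow, show 4 = 2 * 2 from rfl, pow_mul, Complex.sq_norm, normSq_add_mul_I]

lemma one_div_sq_add_sq_sq_le {r Ω : ℝ} (hΩ : 0 < Ω) (hr : 1 / Ω ≤ r) (t : ℝ) :
    1 / (r ^ 2 + t ^ 2) ^ 2 ≤ Ω ^ 2 * (1 / r ^ 2) := by
  have hr₀ : 0 < r := (one_div_pos.mpr hΩ).trans_le hr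
  have hrΩ : 1 / r ^ 2 ≤ Ω ^ 2 := by
    rw [one_div_le (by positivity) (by positivity), ← one_div_pow]
    gcongr
  calc 1 / (r ^ 2 + t ^ 2) ^ 2 ≤ 1 / (r ^ 2) ^ 2 := by gcongr; nlinarith [sq_nonneg t]
    _ = 1 / r ^ 2 * (1 / r ^ 2) := by ring
    _ ≤ Ω ^ 2 * (1 / r ^ 2) := by gcongr

def bathRate (T Ω : ℝ) (k : ℕ) : ℝ := 1 / Ω + k / T

def bathTerm (T Ω t : ℝ) (k : ℕ) (ω : ℝ) : ℂ :=
  ((Ω : ℂ) ^ 2)⁻¹ * ((ω : ℂ) ^ 3 * cexp (-((bathRate T Ω k + t * I) * ω)) +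
    (ω : ℂ) ^ 3 * cexp (-((bathRate T Ω (k + 1) - t * I) * ω)))

def bathMajorant (T Ω : ℝ) (k : ℕ) (t : ℝ) : ℝ :=
  6 / Ω ^ 2 * (1 / (bathRate T Ω k ^ 2 + t ^ 2) ^ 2 + 1 / (bathRate T Ω (k + 1) ^ 2 + t ^ 2) ^ 2)

section Bath

variable {T Ω : ℝ}

lemma one_div_le_bathRate (hT : 0 < T) (k : ℕ) : 1 / Ω ≤ bathRate T Ω k :=
  le_add_of_nonneg_right (by positivity)

lemma bathRate_pos (hT : 0 < T) (hΩ : 0 < Ω) (k : ℕ) : 0 < bathRate T Ω k :=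
  (one_div_pos.mpr hΩ).trans_le (one_div_le_bathRate hT k)

lemma one_div_bathRate_succ_sq_le (hT : 0 < T) (hΩ : 0 < Ω) (k : ℕ) :
    1 / bathRate T Ω (k + 1) ^ 2 ≤ T ^ 2 * (1 / ((k : ℝ) + 1) ^ 2) := by
  have hk : ((k : ℝ) + 1) / T ≤ bathRate T Ω (k + 1) := by
    simp only [bathRate]
    push_cast
    linarith [one_div_pos.mpr hΩ]
  calc 1 / bathRate T Ω (k + 1) ^ 2 ≤ 1 / (((k : ℝ) + 1) / T) ^ 2 := by gcongr
    _ = T ^ 2 * (1 / ((k : ℝ) + 1) ^ 2) := by field_simp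

lemma summable_one_div_bathRate_sq (hT : 0 < T) (hΩ : 0 < Ω) :
    Summable fun k => 1 / bathRate T Ω k ^ 2 :=
  (summable_nat_add_iff 1).mp <| hasSum_one_div_nat_add_one_sq.summable.mul_left (T ^ 2)
    |>.of_nonneg_of_le (fun k => by positivity) (one_div_bathRate_succ_sq_le hT hΩ)

lemma hasSum_bathTerm (hT : 0 < T) (t : ℝ) {ω : ℝ} (hω : 0 < ω) :
    HasSum (fun k => bathTerm T Ω t k ω) ((Jspec Ω ω : ℂ) *
      (cexp (I * ω * t) / (cexp (ω / T) - 1) +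
        cexp (-(I * ω * t)) * (1 / (cexp (ω / T) - 1) + 1))) := by
  have hw : 0 < ((ω : ℂ) / T).re := by simpa using div_pos hω hT
  set q := cexp (-(ω / T))
  set J : ℂ := (ω : ℂ) ^ 3 / (Ω : ℂ) ^ 2 * cexp (-(ω / Ω))
  have hJ : (Jspec Ω ω : ℂ) = J := by
    simp only [J, Jspec, neg_div]
    push_cast
    ring
  have e₁ (k : ℕ) : cexp (-((bathRate T Ω k + t * I) * ω)) =
      cexp (-(ω / Ω)) * cexp (-(I * ω * t)) * q ^ k := by
    rw [← exp_nat_mul, ← exp_add, ← exp_add, bathRate]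
    congr 1
    push_cast
    ring
  have e₂ (k : ℕ) : cexp (-((bathRate T Ω (k + 1) - t * I) * ω)) =
      cexp (-(ω / Ω)) * cexp (I * ω * t) * q ^ (k + 1) := by
    rw [← exp_nat_mul, ← exp_add, ← exp_add, bathRate]
    congr 1
    push_cast
    ring
  have hterm : (fun k => bathTerm T Ω t k ω) =
      fun k => J * cexp (-(I * ω * t)) * q ^ k + J * cexp (I * ω * t) * q ^ (k + 1) := by
    funext k
    simp only [bathTerm, e₁, e₂, J]
    ring
  rw [hterm, hJ, show J * (cexp (I * ω * t) / (cexp (ω / T) - 1) +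
      cexp (-(I * ω * t)) * (1 / (cexp (ω / T) - 1) + 1)) =
      J * cexp (-(I * ω * t)) * (1 / (cexp (ω / T) - 1) + 1) +
        J * cexp (I * ω * t) * (1 / (cexp (ω / T) - 1)) by ring]
  exact ((hasSum_cexp_neg_pow hw).mul_left _).add ((hasSum_cexp_neg_pow_succ hw).mul_left _)

lemma integrableOn_bathTerm (hT : 0 < T) (hΩ : 0 < Ω) (t : ℝ) (k : ℕ) :
    IntegrableOn (bathTerm T Ω t k) (Ioi 0) :=
  ((integrableOn_pow_mul_cexp_neg_mul 3 (by simpa using bathRate_pos hT hΩ k)).add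
    (integrableOn_pow_mul_cexp_neg_mul 3 (by simpa using bathRate_pos hT hΩ (k + 1)))).const_mul _

lemma integral_bathTerm (hT : 0 < T) (hΩ : 0 < Ω) (t : ℝ) (k : ℕ) :
    ∫ ω in Ioi (0 : ℝ), bathTerm T Ω t k ω = ((Ω : ℂ) ^ 2)⁻¹ *
      (6 / (bathRate T Ω k + t * I) ^ 4 + 6 / (bathRate T Ω (k + 1) - t * I) ^ 4) := by
  have hz₁ : 0 < ((bathRate T Ω k : ℂ) + t * I).re := by simpa using bathRate_pos hT hΩ k
  have hz₂ : 0 < ((bathRate T Ω (k + 1) : ℂ) - t * I).re := by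
    simpa using bathRate_pos hT hΩ (k + 1)
  unfold bathTerm
  rw [integral_const_mul, integral_add (integrableOn_pow_mul_cexp_neg_mul 3 hz₁)
    (integrableOn_pow_mul_cexp_neg_mul 3 hz₂), integral_pow_mul_cexp_neg_mul 3 hz₁,
    integral_pow_mul_cexp_neg_mul 3 hz₂]
  norm_num [Nat.factorial]

lemma norm_integral_bathTerm_le (hT : 0 < T) (hΩ : 0 < Ω) (t : ℝ) (k : ℕ) :
    ‖∫ ω in Ioi (0 : ℝ), bathTerm T Ω t k ω‖ ≤ bathMajorant T Ω k t := by
  have hconj : (bathRate T Ω (k + 1) : ℂ) - t * I = bathRate T Ω (k + 1) + ((-t : ℝ) : ℂ) * I := by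
    push_cast
    ring
  rw [integral_bathTerm hT hΩ, hconj, norm_mul]
  refine (mul_le_mul_of_nonneg_left (norm_add_le _ _) (norm_nonneg _)).trans_eq ?_
  simp only [norm_div, norm_ofReal_add_mul_I_pow_four, neg_sq, bathMajorant]
  simp
  ring

lemma norm_bathTerm_le (t : ℝ) (k : ℕ) {ω : ℝ} (hω : 0 ≤ ω) :
    ‖bathTerm T Ω t k ω‖ ≤ (Ω ^ 2)⁻¹ *
      (ω ^ 3 * rexp (-(bathRate T Ω k * ω)) + ω ^ 3 * rexp (-(bathRate T Ω (k + 1) * ω))) := by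
  rw [bathTerm, norm_mul]
  refine (mul_le_mul_of_nonneg_left (norm_add_le _ _) (norm_nonneg _)).trans_eq ?_
  rw [norm_pow_mul_cexp_neg_mul 3 hω, norm_pow_mul_cexp_neg_mul 3 hω]
  simp

lemma integral_norm_bathTerm_le (hT : 0 < T) (hΩ : 0 < Ω) (t : ℝ) (k : ℕ) :
    ∫ ω in Ioi (0 : ℝ), ‖bathTerm T Ω t k ω‖ ≤ bathMajorant T Ω k 0 := by
  have hr₀ := bathRate_pos hT hΩ k
  have hr₁ := bathRate_pos hT hΩ (k + 1)
  have hint₀ := integrableOn_pow_mul_exp_neg_mul 3 hr₀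
  have hint₁ := integrableOn_pow_mul_exp_neg_mul 3 hr₁
  calc ∫ ω in Ioi (0 : ℝ), ‖bathTerm T Ω t k ω‖
      ≤ ∫ ω in Ioi (0 : ℝ), (Ω ^ 2)⁻¹ *
          (ω ^ 3 * rexp (-(bathRate T Ω k * ω)) + ω ^ 3 * rexp (-(bathRate T Ω (k + 1) * ω))) := by
        refine integral_mono_of_nonneg (ae_of_all _ fun ω => norm_nonneg _)
          ((hint₀.add hint₁).const_mul _) ?_
        filter_upwards [ae_restrict_mem measurableSet_Ioi] with ω hω
        exact norm_bathTerm_le t k (le_of_lt hω)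
    _ = bathMajorant T Ω k 0 := by
        rw [integral_const_mul, integral_add hint₀ hint₁, integral_pow_mul_exp_neg_mul 3 hr₀,
          integral_pow_mul_exp_neg_mul 3 hr₁, bathMajorant]
        norm_num [Nat.factorial]
        ring

lemma bathMajorant_nonneg (k : ℕ) (t : ℝ) : 0 ≤ bathMajorant T Ω k t := by
  unfold bathMajorant
  positivity

lemma summable_one_div_bathRate_sq_add_succ (hT : 0 < T) (hΩ : 0 < Ω) :
    Summable fun k => 1 / bathRate T Ω k ^ 2 + 1 / bathRate T Ω (k + 1) ^ 2 :=
  have hs := summable_one_div_bathRate_sq hT hΩ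
  hs.add ((summable_nat_add_iff 1).mpr hs)

lemma summable_bathMajorant (hT : 0 < T) (hΩ : 0 < Ω) (t : ℝ) :
    Summable fun k => bathMajorant T Ω k t := by
  refine ((summable_one_div_bathRate_sq_add_succ hT hΩ).mul_left 6).of_nonneg_of_le
    (fun k => bathMajorant_nonneg k t) fun k => ?_
  have h₀ := one_div_sq_add_sq_sq_le hΩ (one_div_le_bathRate hT k) t
  have h₁ := one_div_sq_add_sq_sq_le hΩ (one_div_le_bathRate hT (k + 1)) t
  calc bathMajorant T Ω k t ≤ 6 / Ω ^ 2 * (Ω ^ 2 * (1 / bathRate T Ω k ^ 2) +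
        Ω ^ 2 * (1 / bathRate T Ω (k + 1) ^ 2)) := by
        unfold bathMajorant
        gcongr
    _ = 6 * (1 / bathRate T Ω k ^ 2 + 1 / bathRate T Ω (k + 1) ^ 2) := by
        field_simp

lemma hasSum_integral_bathTerm (hT : 0 < T) (hΩ : 0 < Ω) (t : ℝ) :
    HasSum (fun k => ∫ ω in Ioi (0 : ℝ), bathTerm T Ω t k ω) (bathCorr T Ω t) := by
  have h := hasSum_integral_of_summable_integral_norm (integrableOn_bathTerm hT hΩ t)
    ((summable_bathMajorant hT hΩ 0).of_nonneg_of_le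
      (fun k => integral_nonneg fun _ => norm_nonneg _) (integral_norm_bathTerm_le hT hΩ t))
  rwa [setIntegral_congr_fun measurableSet_Ioi fun ω hω => (hasSum_bathTerm hT t hω).tsum_eq] at h

lemma norm_bathCorr_le (hT : 0 < T) (hΩ : 0 < Ω) (t : ℝ) :
    ‖bathCorr T Ω t‖ ≤ ∑' k, bathMajorant T Ω k t :=
  (hasSum_integral_bathTerm hT hΩ t).norm_le_of_bounded (summable_bathMajorant hT hΩ t).hasSum
    (norm_integral_bathTerm_le hT hΩ t)

lemma mul_bathMajorant (k : ℕ) (t : ℝ) : t * bathMajorant T Ω k t =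
    6 / Ω ^ 2 * (t / (bathRate T Ω k ^ 2 + t ^ 2) ^ 2 +
      t / (bathRate T Ω (k + 1) ^ 2 + t ^ 2) ^ 2) := by
  unfold bathMajorant
  ring

lemma integrableOn_mul_bathMajorant (hT : 0 < T) (hΩ : 0 < Ω) (k : ℕ) :
    IntegrableOn (fun t => t * bathMajorant T Ω k t) (Ioi 0) := by
  simp_rw [mul_bathMajorant]
  exact ((integrableOn_div_sq_add_sq_sq (bathRate_pos hT hΩ k)).add
    (integrableOn_div_sq_add_sq_sq (bathRate_pos hT hΩ (k + 1)))).const_mul _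

lemma integral_mul_bathMajorant (hT : 0 < T) (hΩ : 0 < Ω) (k : ℕ) :
    ∫ t in Ioi (0 : ℝ), t * bathMajorant T Ω k t =
      3 / Ω ^ 2 * (1 / bathRate T Ω k ^ 2 + 1 / bathRate T Ω (k + 1) ^ 2) := by
  simp_rw [mul_bathMajorant]
  rw [integral_const_mul, integral_add (integrableOn_div_sq_add_sq_sq (bathRate_pos hT hΩ k))
    (integrableOn_div_sq_add_sq_sq (bathRate_pos hT hΩ (k + 1))),
    integral_div_sq_add_sq_sq (bathRate_pos hT hΩ k),
    integral_div_sq_add_sq_sq (bathRate_pos hT hΩ (k + 1))]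
  ring

lemma tsum_one_div_bathRate_sq_add_succ_le (hT : 0 < T) (hΩ : 0 < Ω) :
    ∑' k, (1 / bathRate T Ω k ^ 2 + 1 / bathRate T Ω (k + 1) ^ 2) ≤ Ω ^ 2 + π ^ 2 * T ^ 2 / 3 := by
  have hs := summable_one_div_bathRate_sq hT hΩ
  have hs₁ := (summable_nat_add_iff 1).mpr hs
  have hle : ∑' k, 1 / bathRate T Ω (k + 1) ^ 2 ≤ T ^ 2 * (π ^ 2 / 6) := by
    rw [← hasSum_one_div_nat_add_one_sq.tsum_eq, ← tsum_mul_left]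
    exact hs₁.tsum_le_tsum (one_div_bathRate_succ_sq_le hT hΩ)
      (hasSum_one_div_nat_add_one_sq.summable.mul_left _)
  have h₀ : 1 / bathRate T Ω 0 ^ 2 = Ω ^ 2 := by simp [bathRate]
  rw [hs.tsum_add hs₁, hs.tsum_eq_zero_add, h₀]
  linarith

end Bath

/-- First-moment bound on the bath correlation function:
`∫_0^∞ t|C(T,𝔍;t)| dt ≤ 3 + π²T²/Ω²`; in particular the bath correlation timescale
`τ_B(T,𝔍) = 4τ_R(T,𝔍)∫_0^∞ t|C(T,𝔍;t)| dt` is finite at every finite temperature. -/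
theorem integral_mul_abs_bathCorr_le (T Ω : ℝ) (hT : 0 < T) (hΩ : 0 < Ω) :
    (∫ t in Set.Ioi (0 : ℝ), t * ‖bathCorr T Ω t‖) ≤
      3 + Real.pi ^ 2 * T ^ 2 / Ω ^ 2 := by
  calc (∫ t in Ioi (0 : ℝ), t * ‖bathCorr T Ω t‖)
      ≤ ∑' k, ∫ t in Ioi (0 : ℝ), t * bathMajorant T Ω k t := by
        refine integral_le_tsum_integral_of_norm_le_tsum (integrableOn_mul_bathMajorant hT hΩ)
          (fun k => ?_) ?_ ?_
        · filter_upwards [ae_restrict_mem measurableSet_Ioi] with t ht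
          exact mul_nonneg (le_of_lt ht) (bathMajorant_nonneg k t)
        · simp_rw [integral_mul_bathMajorant hT hΩ]
          exact (summable_one_div_bathRate_sq_add_succ hT hΩ).mul_left _
        · filter_upwards [ae_restrict_mem measurableSet_Ioi] with t (ht : 0 < t)
          refine ⟨(summable_bathMajorant hT hΩ t).mul_left t, ?_⟩
          rw [tsum_mul_left, norm_mul, norm_norm, Real.norm_of_nonneg ht.le]
          exact mul_le_mul_of_nonneg_left (norm_bathCorr_le hT hΩ t) ht.le
    _ = 3 / Ω ^ 2 * ∑' k, (1 / bathRate T Ω k ^ 2 + 1 / bathRate T Ω (k + 1) ^ 2) := by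
        simp_rw [integral_mul_bathMajorant hT hΩ]
        exact tsum_mul_left
    _ ≤ 3 / Ω ^ 2 * (Ω ^ 2 + π ^ 2 * T ^ 2 / 3) := by
        gcongr
        exact tsum_one_div_bathRate_sq_add_succ_le hT hΩ
    _ = 3 + π ^ 2 * T ^ 2 / Ω ^ 2 := by
        field_simp
end
end
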